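/- Let √2 − 1 < α < 1, let X be an ℕ-valued random variable satisfying the recursive distributional equation, and set s_p := ((2 − p − αp) − √((2 − p − αp)² − 4αp(2−p)))/(2α(2−p)). Then s_p ∈ (0,1), and the probability generating function satisfies G(s) = Q₋(s) for all s ∈ [s_p, 1] and G(s) = Q₊(s) for all s ∈ [0, s_p). -/

import Mathlib

open scoped ENNReal

/-- The Poisson(α) probability mass function on ℕ. -/
noncomputable def poissonPMF (α : ℝ) (k : ℕ) : ℝ≥0∞ :=
  ENNReal.ofReal (Real.exp (-α) * α ^ k / (Nat.factorial k))

/-- The Geometric(1/2) pmf: P(N = k) = (1/2)^(k+1) for k ≥ 0. -/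
noncomputable def geomHalf (k : ℕ) : ℝ≥0∞ := (1 / 2) ^ (k + 1)

/-- The law of (X - 1)⁺ when X has law μ on ℕ. -/
noncomputable def shiftLaw (μ : ℕ → ℝ≥0∞) (k : ℕ) : ℝ≥0∞ :=
  if k = 0 then μ 0 + μ 1 else μ (k + 1)

/-- Convolution of two (sub-)pmfs on ℕ: the law of an independent sum. -/
noncomputable def convAdd (f g : ℕ → ℝ≥0∞) (k : ℕ) : ℝ≥0∞ :=
  ∑ j ∈ Finset.range (k + 1), f j * g (k - j)

/-- n-fold convolution of a pmf on ℕ: the law of a sum of n i.i.d. copies. -/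
noncomputable def iterConv (f : ℕ → ℝ≥0∞) : ℕ → ℕ → ℝ≥0∞
  | 0 => fun k => if k = 0 then 1 else 0
  | n + 1 => convAdd (iterConv f n) f

/-- μ is the law of an ℕ-valued random variable X satisfying the RDE
    X =_d P + ∑_{i=1}^N (X_i - 1)⁺, with P ~ Poisson(α), N ~ Geom(1/2),
    X_i i.i.d. with law μ, all independent. -/
def SatisfiesRDE (α : ℝ) (μ : ℕ → ℝ≥0∞) : Prop :=
  (∑' k, μ k) = 1 ∧
  ∀ k, μ k = ∑' n, geomHalf n * convAdd (poissonPMF α) (iterConv (shiftLaw μ) n) k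

/-- The probability generating function G(s) = E[s^X]. -/
noncomputable def pgf (μ : ℕ → ℝ≥0∞) (s : ℝ) : ℝ := ∑' k, (μ k).toReal * s ^ k

/-- The mean E[X] = ∑ k · P(X = k), valued in [0,∞]. -/
noncomputable def meanENN (μ : ℕ → ℝ≥0∞) : ℝ≥0∞ := ∑' k : ℕ, (k : ℝ≥0∞) * μ k

/-!
Multiplying the RDE by `s ^ k` and summing shows that `G` solves
`G ^ 2 - ((2 - p) s + p) G + s exp (α (s - 1)) = 0` on `[0, 1]`, so `h = 2 G - ((2 - p) s + p)` is
continuous with `h ^ 2 = disc`. On `(0, 1)`, `disc` has the sign of `E = logDiscRatio`, the log of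
`((2 - p) s + p) ^ 2 / (4 s exp (α (s - 1)))`, whose derivative has numerator `-critQuad`.
Since `E ≥ 0 = E 1`, the bound `α > √2 - 1` forces `p > 1 - α`, hence `disc' 1 < 0` and `h < 0`
just below `1`, while `h 0 = p > 0`. A zero `r` of `h` is a minimum of `E`, so `critQuad r = 0`; the
shape of `E` then shows that `r` is the smaller root `s_p` of `critQuad` and that `disc > 0`
elsewhere, so `h` keeps its sign on `[0, s_p)` and on `(s_p, 1]`.
-/

open Filter Topology Set

lemma ENNReal.tsum_mul_tsum_eq_tsum_sum_range (f g : ℕ → ℝ≥0∞) :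
    (∑' n, f n) * ∑' n, g n = ∑' n, ∑ k ∈ Finset.range (n + 1), f k * g (n - k) := by
  simp_rw [← Finset.Nat.sum_antidiagonal_eq_sum_range_succ fun k l => f k * g l,
    ← ENNReal.tsum_mul_right, ← ENNReal.tsum_mul_left,
    ← ENNReal.tsum_prod' (f := fun x => f x.1 * g x.2),
    ← Finset.HasAntidiagonal.sigmaAntidiagonalEquivProd.tsum_eq, ENNReal.tsum_sigma', tsum_fintype]
  exact tsum_congr fun n => Finset.sum_coe_sort _ fun p : ℕ × ℕ => f p.1 * g p.2

-- Taken in `ℝ≥0∞`, where series can be rearranged without summability side conditions.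
noncomputable def genFun (f : ℕ → ℝ≥0∞) (x : ℝ≥0∞) : ℝ≥0∞ := ∑' k, f k * x ^ k

lemma genFun_convAdd (f g : ℕ → ℝ≥0∞) (x : ℝ≥0∞) :
    genFun (convAdd f g) x = genFun f x * genFun g x := by
  rw [genFun, genFun, genFun, ENNReal.tsum_mul_tsum_eq_tsum_sum_range]
  refine tsum_congr fun n => ?_
  rw [convAdd, Finset.sum_mul]
  refine Finset.sum_congr rfl fun k hk => ?_
  rw [← Nat.add_sub_cancel' (Nat.lt_succ_iff.mp (Finset.mem_range.mp hk))]
  simp only [Nat.add_sub_cancel_left, pow_add]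
  ring

lemma genFun_iterConv (f : ℕ → ℝ≥0∞) (x : ℝ≥0∞) (n : ℕ) :
    genFun (iterConv f n) x = genFun f x ^ n := by
  induction n with
  | zero => simp [genFun, iterConv, tsum_ite_eq]
  | succ n ih => rw [iterConv, genFun_convAdd, ih, pow_succ]

lemma genFun_poissonPMF {α s : ℝ} (hα : 0 ≤ α) (hs : 0 ≤ s) :
    genFun (poissonPMF α) (ENNReal.ofReal s) = ENNReal.ofReal (Real.exp (α * (s - 1))) := by
  have hsum := (NormedSpace.expSeries_div_hasSum_exp (α * s)).mul_left (Real.exp (-α))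
  rw [← Real.exp_eq_exp_ℝ, ← Real.exp_add, neg_add_eq_sub, ← mul_sub_one] at hsum
  rw [← hsum.tsum_eq, ENNReal.ofReal_tsum_of_nonneg (fun k => by positivity) hsum.summable, genFun]
  refine tsum_congr fun k => ?_
  rw [poissonPMF, ← ENNReal.ofReal_pow hs, ← ENNReal.ofReal_mul (by positivity)]
  ring_nf

lemma genFun_le_tsum (f : ℕ → ℝ≥0∞) {x : ℝ≥0∞} (hx : x ≤ 1) : genFun f x ≤ ∑' k, f k :=
  ENNReal.tsum_le_tsum fun k => mul_le_of_le_one_right' (pow_le_one' hx k)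

lemma toReal_genFun {μ : ℕ → ℝ≥0∞} (hμ : ∀ k, μ k ≠ ⊤) {s : ℝ} (hs : 0 ≤ s) :
    (genFun μ (ENNReal.ofReal s)).toReal = pgf μ s := by
  rw [genFun, pgf, ENNReal.tsum_toReal_eq fun k => ENNReal.mul_ne_top (hμ k) (by finiteness)]
  simp only [ENNReal.toReal_mul, ENNReal.toReal_pow, ENNReal.toReal_ofReal hs]

lemma tsum_shiftLaw (μ : ℕ → ℝ≥0∞) : ∑' k, shiftLaw μ k = ∑' k, μ k := by
  rw [tsum_eq_zero_add' (f := shiftLaw μ) ENNReal.summable,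
    tsum_eq_zero_add' (f := μ) ENNReal.summable,
    tsum_eq_zero_add' (f := fun k => μ (k + 1)) ENNReal.summable]
  simp only [shiftLaw, if_pos, Nat.succ_ne_zero, if_false]
  ring

lemma mul_genFun_shiftLaw_add (μ : ℕ → ℝ≥0∞) (x : ℝ≥0∞) :
    x * genFun (shiftLaw μ) x + μ 0 = genFun μ x + μ 0 * x := by
  have hterm (k : ℕ) : x * (shiftLaw μ (k + 1) * x ^ (k + 1)) = μ (k + 2) * x ^ (k + 2) := by
    rw [shiftLaw, if_neg k.succ_ne_zero]
    ring
  rw [genFun, genFun, ← ENNReal.tsum_mul_left, tsum_eq_zero_add' ENNReal.summable, tsum_congr hterm,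
    tsum_eq_zero_add' (f := fun k => μ k * x ^ k) ENNReal.summable,
    tsum_eq_zero_add' (f := fun k => μ (k + 1) * x ^ (k + 1)) ENNReal.summable, shiftLaw,
    if_pos rfl]
  ring

lemma two_mul_tsum_geomHalf (y : ℝ≥0∞) :
    2 * ∑' n, geomHalf n * y ^ n = 1 + y * ∑' n, geomHalf n * y ^ n := by
  have hterm (n : ℕ) : 2 * (geomHalf n * y ^ n) = (2⁻¹ * y) ^ n := by
    rw [geomHalf, one_div, pow_succ, mul_pow, ← mul_assoc, mul_comm 2, mul_assoc _ 2⁻¹ 2,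
      ENNReal.inv_mul_cancel two_ne_zero ENNReal.ofNat_ne_top, mul_one]
  rw [← ENNReal.tsum_mul_left, tsum_congr hterm, tsum_eq_zero_add' ENNReal.summable,
    ← ENNReal.tsum_mul_left, pow_zero]
  congr 1
  refine tsum_congr fun n => ?_
  rw [geomHalf, one_div]
  ring

lemma pgf_zero (μ : ℕ → ℝ≥0∞) : pgf μ 0 = (μ 0).toReal := by
  rw [pgf, tsum_eq_single 0 fun k hk => by simp [hk]]
  simp

lemma continuousOn_pgf {μ : ℕ → ℝ≥0∞} (hμ : ∑' k, μ k ≠ ⊤) : ContinuousOn (pgf μ) (Icc 0 1) :=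
  continuousOn_tsum (fun k => by fun_prop) (ENNReal.summable_toReal hμ) fun k s hs => by
    rw [norm_mul, norm_pow, Real.norm_of_nonneg ENNReal.toReal_nonneg, Real.norm_of_nonneg hs.1]
    exact mul_le_of_le_one_right ENNReal.toReal_nonneg (pow_le_one₀ hs.1 hs.2)

lemma pgf_le_one {μ : ℕ → ℝ≥0∞} (hμ : ∑' k, μ k = 1) {s : ℝ} (hs0 : 0 ≤ s) (hs1 : s ≤ 1) :
    pgf μ s ≤ 1 := by
  rw [← toReal_genFun (fun k => ENNReal.ne_top_of_tsum_ne_top (hμ ▸ ENNReal.one_ne_top) k) hs0]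
  exact ENNReal.toReal_le_of_le_ofReal zero_le_one
    (by simpa [hμ] using genFun_le_tsum μ (ENNReal.ofReal_le_one.2 hs1))

namespace SatisfiesRDE

variable {α : ℝ} {μ : ℕ → ℝ≥0∞}

lemma apply_zero_pos (hμ : SatisfiesRDE α μ) : 0 < μ 0 := by
  rw [hμ.2 0]
  refine lt_of_lt_of_le ?_ (ENNReal.le_tsum 0)
  simp [geomHalf, convAdd, iterConv, poissonPMF, Real.exp_pos]

lemma apply_ne_top (hμ : SatisfiesRDE α μ) (k : ℕ) : μ k ≠ ⊤ :=
  ENNReal.ne_top_of_tsum_ne_top (hμ.1 ▸ ENNReal.one_ne_top) k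

lemma genFun_eq (hμ : SatisfiesRDE α μ) (x : ℝ≥0∞) :
    genFun μ x = genFun (poissonPMF α) x * ∑' n, geomHalf n * genFun (shiftLaw μ) x ^ n := by
  calc genFun μ x
      = ∑' n, geomHalf n * genFun (convAdd (poissonPMF α) (iterConv (shiftLaw μ) n)) x := by
        simp_rw [genFun, ← ENNReal.tsum_mul_left]
        conv_lhs => rw [tsum_congr fun k => by rw [hμ.2 k, ← ENNReal.tsum_mul_right]]
        rw [ENNReal.tsum_comm]
        simp_rw [mul_assoc]
    _ = _ := by
        simp_rw [genFun_convAdd, genFun_iterConv, ← ENNReal.tsum_mul_left, mul_left_comm]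

lemma two_mul_genFun (hμ : SatisfiesRDE α μ) (x : ℝ≥0∞) :
    2 * genFun μ x = genFun (poissonPMF α) x + genFun (shiftLaw μ) x * genFun μ x := by
  rw [hμ.genFun_eq, mul_left_comm, two_mul_tsum_geomHalf]
  ring

lemma pgf_quadratic (hμ : SatisfiesRDE α μ) (hα : 0 ≤ α) {s : ℝ} (hs0 : 0 ≤ s) (hs1 : s ≤ 1) :
    pgf μ s ^ 2 - ((2 - (μ 0).toReal) * s + (μ 0).toReal) * pgf μ s
      + s * Real.exp (α * (s - 1)) = 0 := by
  set x := ENNReal.ofReal s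
  have hx : x ≤ 1 := ENNReal.ofReal_le_one.2 hs1
  have hxs : x.toReal = s := ENNReal.toReal_ofReal hs0
  have hGs : (genFun μ x).toReal = pgf μ s := toReal_genFun hμ.apply_ne_top hs0
  have hG : genFun μ x ≠ ⊤ :=
    ne_top_of_le_ne_top ENNReal.one_ne_top (hμ.1 ▸ genFun_le_tsum μ hx)
  have hH : genFun (shiftLaw μ) x ≠ ⊤ := ne_top_of_le_ne_top ENNReal.one_ne_top
    ((tsum_shiftLaw μ).trans hμ.1 ▸ genFun_le_tsum (shiftLaw μ) hx)
  have hrde := congrArg ENNReal.toReal (hμ.two_mul_genFun x)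
  have hshift := congrArg ENNReal.toReal (mul_genFun_shiftLaw_add μ x)
  rw [genFun_poissonPMF hα hs0] at hrde
  rw [ENNReal.toReal_add (by finiteness) (ENNReal.mul_ne_top hH hG)] at hrde
  rw [ENNReal.toReal_add (ENNReal.mul_ne_top (by finiteness) hH) (hμ.apply_ne_top 0),
    ENNReal.toReal_add hG (ENNReal.mul_ne_top (hμ.apply_ne_top 0) (by finiteness))] at hshift
  simp only [ENNReal.toReal_mul, ENNReal.toReal_ofNat, ENNReal.toReal_ofReal (Real.exp_nonneg _),
    hxs, hGs] at hrde hshift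
  linear_combination (-s) * hrde - pgf μ s * hshift

end SatisfiesRDE

lemma IsPreconnected.neg_of_forall_ne_zero {X : Type*} [TopologicalSpace X] {S : Set X}
    (hS : IsPreconnected S) {f : X → ℝ} (hf : ContinuousOn f S) (hne : ∀ x ∈ S, f x ≠ 0)
    {a x : X} (ha : a ∈ S) (hfa : f a < 0) (hx : x ∈ S) : f x < 0 := by
  by_contra! hfx
  obtain ⟨z, hz, hfz⟩ := hS.intermediate_value ha hx hf ⟨hfa.le, hfx⟩
  exact hne z hz hfz

lemma IsPreconnected.pos_of_forall_ne_zero {X : Type*} [TopologicalSpace X] {S : Set X}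
    (hS : IsPreconnected S) {f : X → ℝ} (hf : ContinuousOn f S) (hne : ∀ x ∈ S, f x ≠ 0)
    {a x : X} (ha : a ∈ S) (hfa : 0 < f a) (hx : x ∈ S) : 0 < f x := by
  by_contra! hfx
  obtain ⟨z, hz, hfz⟩ := hS.intermediate_value hx ha hf ⟨hfx, hfa.le⟩
  exact hne z hz hfz

lemma sign_of_unique_zero {h : ℝ → ℝ} (hcont : ContinuousOn h (Icc 0 1)) {r s₁ : ℝ}
    (hr0 : 0 < r) (hrs₁ : r < s₁) (hs₁1 : s₁ < 1) (h0 : 0 < h 0) (hr : h r = 0) (h1 : h 1 = 0)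
    (hs₁ : h s₁ < 0) (hne : ∀ s ∈ Ioo 0 1, s ≠ r → h s ≠ 0) :
    (∀ s ∈ Icc r 1, h s ≤ 0) ∧ ∀ s ∈ Ico 0 r, 0 ≤ h s := by
  refine ⟨fun s hs => ?_, fun s hs => ?_⟩
  · rcases hs.1.eq_or_lt with rfl | hrs
    · exact hr.le
    rcases hs.2.eq_or_lt with rfl | hs1
    · exact h1.le
    exact (isPreconnected_Ioo.neg_of_forall_ne_zero
      (hcont.mono (Ioo_subset_Icc_self.trans (Icc_subset_Icc hr0.le le_rfl)))
      (fun t ht => hne t ⟨hr0.trans ht.1, ht.2⟩ ht.1.ne') ⟨hrs₁, hs₁1⟩ hs₁ ⟨hrs, hs1⟩).le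
  · refine (isPreconnected_Ico.pos_of_forall_ne_zero
      (hcont.mono (Ico_subset_Icc_self.trans (Icc_subset_Icc le_rfl (hrs₁.trans hs₁1).le)))
      (fun t ht => ?_) (left_mem_Ico.2 hr0) h0 hs).le
    rcases ht.1.eq_or_lt with rfl | ht0
    · exact h0.ne'
    · exact hne t ⟨ht0, ht.2.trans (hrs₁.trans hs₁1)⟩ ht.2.ne

lemma sub_sqrt_discrim_div_eq {a b c r r' : ℝ} (ha : 0 < a) (hsum : a * (r + r') = b)
    (hprod : a * r * r' = c) (hrr' : r ≤ r') : (b - √(b ^ 2 - 4 * a * c)) / (2 * a) = r := by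
  have hdisc : b ^ 2 - 4 * a * c = (a * (r' - r)) ^ 2 := by
    rw [← hsum, ← hprod]
    ring
  rw [hdisc, Real.sqrt_sq (mul_nonneg ha.le (sub_nonneg.2 hrr')), ← hsum]
  field_simp
  ring

lemma eq_half_add_sqrt_of_sq_eq {g b d : ℝ} (hsq : (2 * g - b) ^ 2 = d) (hg : 0 ≤ 2 * g - b) :
    g = 1 / 2 * (b + √d) := by
  rw [← hsq, Real.sqrt_sq hg]
  ring

lemma eq_half_sub_sqrt_of_sq_eq {g b d : ℝ} (hsq : (2 * g - b) ^ 2 = d) (hg : 2 * g - b ≤ 0) :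
    g = 1 / 2 * (b - √d) := by
  rw [← hsq, Real.sqrt_sq_eq_abs, abs_of_nonpos hg]
  ring

section Discriminant

variable {α p : ℝ}

noncomputable def disc (α p s : ℝ) : ℝ := ((2 - p) * s + p) ^ 2 - 4 * s * Real.exp (α * (s - 1))

-- Unlike `disc`, it has a derivative with polynomial numerator, `-critQuad α p s`.
noncomputable def logDiscRatio (α p s : ℝ) : ℝ :=
  2 * Real.log ((2 - p) * s + p) - Real.log 4 - Real.log s - α * (s - 1)

noncomputable def critQuad (α p s : ℝ) : ℝ := α * (2 - p) * s ^ 2 - (2 - p - α * p) * s + p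

lemma hasDerivAt_disc (α p s : ℝ) :
    HasDerivAt (disc α p)
      (2 * ((2 - p) * s + p) * (2 - p) - 4 * (1 + α * s) * Real.exp (α * (s - 1))) s := by
  have hexp : HasDerivAt (fun t => Real.exp (α * (t - 1))) (Real.exp (α * (s - 1)) * α) s := by
    simpa using (((hasDerivAt_id s).sub_const 1).const_mul α).exp
  refine (((((hasDerivAt_id s).const_mul (2 - p)).add_const p).pow 2).sub
    (((hasDerivAt_id s).const_mul 4).mul hexp)).congr_deriv ?_
  simp only [Nat.cast_ofNat, id_eq, Nat.add_one_sub_one, pow_one, mul_one, sub_right_inj]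
  ring

lemma disc_one : disc α p 1 = 0 := by
  simp only [disc, mul_one, sub_self, mul_zero, Real.exp_zero]
  ring

lemma two_sub_mul_add_pos (hp0 : 0 ≤ p) (hp2 : p ≤ 2) {s : ℝ} (hs : 0 < s) :
    0 < (2 - p) * s + p := by
  rcases hp0.eq_or_lt with rfl | hp0
  · linarith
  · nlinarith

lemma logDiscRatio_one : logDiscRatio α p 1 = 0 := by
  rw [logDiscRatio, show (2 - p) * 1 + p = 2 by ring, show (4 : ℝ) = 2 ^ 2 by norm_num,
    Real.log_pow]
  simp

lemma logDiscRatio_eq_log_sub_log {s : ℝ} (hs : 0 < s) :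
    logDiscRatio α p s
      = Real.log (((2 - p) * s + p) ^ 2) - Real.log (4 * s * Real.exp (α * (s - 1))) := by
  rw [logDiscRatio, Real.log_pow, Real.log_mul (by positivity) (Real.exp_ne_zero _),
    Real.log_mul (by norm_num) hs.ne', Real.log_exp]
  push_cast
  ring

lemma logDiscRatio_pos_iff {s : ℝ} (hb : (2 - p) * s + p ≠ 0) (hs : 0 < s) :
    0 < logDiscRatio α p s ↔ 0 < disc α p s := by
  rw [logDiscRatio_eq_log_sub_log hs, sub_pos, Real.log_lt_log_iff (by positivity) (by positivity),
    disc, sub_pos]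

lemma logDiscRatio_nonneg_iff {s : ℝ} (hb : (2 - p) * s + p ≠ 0) (hs : 0 < s) :
    0 ≤ logDiscRatio α p s ↔ 0 ≤ disc α p s := by
  rw [logDiscRatio_eq_log_sub_log hs, sub_nonneg,
    Real.log_le_log_iff (by positivity) (by positivity), disc, sub_nonneg]

lemma hasDerivAt_logDiscRatio {s : ℝ} (hb : (2 - p) * s + p ≠ 0) (hs : s ≠ 0) :
    HasDerivAt (logDiscRatio α p) (-critQuad α p s / (((2 - p) * s + p) * s)) s := by
  refine (((((hasDerivAt_id s).const_mul (2 - p)).add_const p).log hb).const_mul 2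
    |>.sub_const (Real.log 4) |>.sub (Real.hasDerivAt_log hs)
    |>.sub (((hasDerivAt_id s).sub_const 1).const_mul α)).congr_deriv ?_
  simp only [critQuad, id]
  field_simp
  ring

lemma strictAntiOn_logDiscRatio (hp0 : 0 ≤ p) (hp2 : p ≤ 2) {u v : ℝ} (hu : 0 < u)
    (hq : ∀ s ∈ Ioo u v, 0 < critQuad α p s) : StrictAntiOn (logDiscRatio α p) (Icc u v) := by
  have hderiv (s) (hs : u ≤ s) := hasDerivAt_logDiscRatio (α := α)
    (two_sub_mul_add_pos hp0 hp2 (hu.trans_le hs)).ne' (hu.trans_le hs).ne'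
  refine strictAntiOn_of_deriv_neg (convex_Icc u v)
    (fun s hs => (hderiv s hs.1).continuousAt.continuousWithinAt) fun s hs => ?_
  rw [interior_Icc] at hs
  rw [(hderiv s hs.1.le).deriv]
  have := two_sub_mul_add_pos hp0 hp2 (hu.trans hs.1)
  exact div_neg_of_neg_of_pos (neg_neg_of_pos (hq s hs)) (by nlinarith [hs.1])

lemma strictMonoOn_logDiscRatio (hp0 : 0 ≤ p) (hp2 : p ≤ 2) {u v : ℝ} (hu : 0 < u)
    (hq : ∀ s ∈ Ioo u v, critQuad α p s < 0) : StrictMonoOn (logDiscRatio α p) (Icc u v) := by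
  have hderiv (s) (hs : u ≤ s) := hasDerivAt_logDiscRatio (α := α)
    (two_sub_mul_add_pos hp0 hp2 (hu.trans_le hs)).ne' (hu.trans_le hs).ne'
  refine strictMonoOn_of_deriv_pos (convex_Icc u v)
    (fun s hs => (hderiv s hs.1).continuousAt.continuousWithinAt) fun s hs => ?_
  rw [interior_Icc] at hs
  rw [(hderiv s hs.1.le).deriv]
  have := two_sub_mul_add_pos hp0 hp2 (hu.trans hs.1)
  exact div_pos (neg_pos_of_neg (hq s hs)) (by nlinarith [hs.1])

lemma critQuad_eq_zero_of_isLocalMin {s : ℝ} (hb : (2 - p) * s + p ≠ 0) (hs : s ≠ 0)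
    (hmin : IsLocalMin (logDiscRatio α p) s) : critQuad α p s = 0 := by
  simpa [hb, hs] using hmin.hasDerivAt_eq_zero (hasDerivAt_logDiscRatio hb hs)

lemma critQuad_eq_mul_sub_mul_sub {r r' : ℝ} (hsum : α * (2 - p) * (r + r') = 2 - p - α * p)
    (hprod : α * (2 - p) * r * r' = p) (s : ℝ) :
    critQuad α p s = α * (2 - p) * (s - r) * (s - r') := by
  rw [critQuad]
  linear_combination s * hsum - hprod

lemma one_sub_lt_of_logDiscRatio_nonneg (hα0 : 0 < α) (hα : 2 < (1 + α) ^ 2) (hp0 : 0 < p)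
    (hE : ∀ s ∈ Ioo 0 1, 0 ≤ logDiscRatio α p s) : 1 - α < p := by
  -- Otherwise `critQuad < 0` on `(p / (α * (2 - p)), 1)`, so `E` would increase there to `E 1 = 0`.
  by_contra! hp
  have ha : 0 < α * (2 - p) := by nlinarith
  set t := p / (α * (2 - p))
  have ht0 : 0 < t := by positivity
  have ht1 : t < 1 := by
    rw [div_lt_one ha]
    nlinarith [mul_le_mul_of_nonneg_right hp (by linarith : (0 : ℝ) ≤ 1 + α)]
  have hq : ∀ s ∈ Ioo t 1, critQuad α p s < 0 := fun s hs => by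
    have hts : p < α * (2 - p) * s := (div_lt_iff₀' ha).mp hs.1
    have hfac : critQuad α p s = (α * (2 - p) * s - p) * (s - 1) + 2 * (α + p - 1) * s := by
      rw [critQuad]
      ring
    rw [hfac]
    nlinarith [hs.2, ht0.trans hs.1]
  have hlt := strictMonoOn_logDiscRatio hp0.le (by linarith) ht0 hq (left_mem_Icc.2 ht1.le)
    (right_mem_Icc.2 ht1.le) ht1
  rw [logDiscRatio_one] at hlt
  exact (hE t ⟨ht0, ht1⟩).not_gt hlt

lemma eventually_mul_sub_lt_sub_of_hasDerivAt {f : ℝ → ℝ} {f' c x : ℝ} (hf : HasDerivAt f f' x)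
    (hc : c < -f') : ∀ᶠ s in 𝓝[<] x, c * (x - s) < f s - f x := by
  have hslope : Tendsto (slope f x) (𝓝[<] x) (𝓝 f') :=
    (hasDerivAt_iff_tendsto_slope.mp hf).mono_left (nhdsWithin_mono _ fun _ hy => ne_of_lt hy)
  filter_upwards [hslope.eventually_lt_const (by linarith : f' < -c), self_mem_nhdsWithin]
    with s hs hsx
  rw [slope_def_field, div_lt_iff_of_neg (sub_neg.2 hsx)] at hs
  linarith

lemma exists_sq_lt_disc (hp : 1 - α < p) :
    ∃ s ∈ Ioo (0 : ℝ) 1, ((2 - p) * (1 - s)) ^ 2 < disc α p s := by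
  have hD : HasDerivAt (disc α p) (4 * (1 - p - α)) 1 := by
    convert hasDerivAt_disc α p 1 using 1
    simp only [mul_one, sub_self, mul_zero, Real.exp_zero]
    ring
  have hslope := eventually_mul_sub_lt_sub_of_hasDerivAt hD (c := 2 * (p + α - 1)) (by linarith)
  have hsmall : ∀ᶠ s in 𝓝[<] (1 : ℝ), (2 - p) ^ 2 * (1 - s) < 2 * (p + α - 1) := by
    have : Tendsto (fun s : ℝ => (2 - p) ^ 2 * (1 - s)) (𝓝[<] 1) (𝓝 0) := by
      have hcont : Continuous fun s : ℝ => (2 - p) ^ 2 * (1 - s) := by fun_prop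
      simpa using (hcont.tendsto 1).mono_left nhdsWithin_le_nhds
    exact this.eventually_lt_const (by linarith)
  obtain ⟨s, ⟨hs1, hs2⟩, hs⟩ := ((hslope.and hsmall).and (Ioo_mem_nhdsLT zero_lt_one)).exists
  refine ⟨s, hs, ?_⟩
  rw [disc_one, sub_zero] at hs1
  nlinarith [mul_lt_mul_of_pos_right hs2 (sub_pos.2 hs.2)]

lemma exists_root_of_sq_eq_disc (hα0 : 0 < α) (hα : 2 < (1 + α) ^ 2) (hp0 : 0 < p) (hp2 : p ≤ 2)
    {h : ℝ → ℝ} (hcont : ContinuousOn h (Icc 0 1)) (hsq : ∀ s ∈ Icc 0 1, h s ^ 2 = disc α p s)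
    (h0 : 0 < h 0) (hle : ∀ s ∈ Icc 0 1, h s ≤ (2 - p) * (1 - s)) :
    ∃ r s₁, 0 < r ∧ r < s₁ ∧ s₁ < 1 ∧ h r = 0 ∧ h s₁ < 0 := by
  have hE : ∀ s ∈ Ioo 0 1, 0 ≤ logDiscRatio α p s := fun s hs =>
    (logDiscRatio_nonneg_iff (two_sub_mul_add_pos hp0.le hp2 hs.1).ne' hs.1).2
      (hsq s (Ioo_subset_Icc_self hs) ▸ sq_nonneg _)
  obtain ⟨s₁, hs₁, hlt⟩ := exists_sq_lt_disc (one_sub_lt_of_logDiscRatio_nonneg hα0 hα hp0 hE)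
  have hs₁neg : h s₁ < 0 := by
    by_contra! hnn
    rw [← hsq s₁ (Ioo_subset_Icc_self hs₁)] at hlt
    exact hlt.not_ge (pow_le_pow_left₀ hnn (hle s₁ (Ioo_subset_Icc_self hs₁)) 2)
  obtain ⟨r, hr, hr0⟩ := intermediate_value_Icc' hs₁.1.le
    (hcont.mono (Icc_subset_Icc le_rfl hs₁.2.le)) ⟨hs₁neg.le, h0.le⟩
  refine ⟨r, s₁, hr.1.lt_of_ne ?_, hr.2.lt_of_ne ?_, hs₁.2, hr0, hs₁neg⟩
  · rintro rfl
    exact h0.ne' hr0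
  · rintro rfl
    exact hs₁neg.ne hr0

lemma exists_vieta_of_logDiscRatio_eq_zero (hα0 : 0 < α) (hp0 : 0 < p) (hp2 : p < 2)
    (hE : ∀ s ∈ Ioo 0 1, 0 ≤ logDiscRatio α p s) {r : ℝ} (hr : r ∈ Ioo 0 1)
    (hEr : logDiscRatio α p r = 0) :
    ∃ r', r < r' ∧ α * (2 - p) * (r + r') = 2 - p - α * p ∧ α * (2 - p) * r * r' = p := by
  have hqr : critQuad α p r = 0 :=
    critQuad_eq_zero_of_isLocalMin (two_sub_mul_add_pos hp0.le hp2.le hr.1).ne' hr.1.ne' <| by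
      filter_upwards [Ioo_mem_nhds hr.1 hr.2] with s hs
      rw [hEr]
      exact hE s hs
  have ha : 0 < α * (2 - p) := mul_pos hα0 (by linarith)
  set r' := p / (α * (2 - p) * r)
  have hprod : α * (2 - p) * r * r' = p := mul_div_cancel₀ _ (mul_pos ha hr.1).ne'
  have hsum : α * (2 - p) * (r + r') = 2 - p - α * p := by
    have : r * (α * (2 - p) * (r + r') - (2 - p - α * p)) = 0 := by
      rw [critQuad] at hqr
      linear_combination hqr + hprod
    exact sub_eq_zero.1 ((mul_eq_zero.1 this).resolve_left hr.1.ne')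
  refine ⟨r', ?_, hsum, hprod⟩
  by_contra! hr'r
  have hanti := strictAntiOn_logDiscRatio (v := 1) hp0.le hp2.le hr.1 fun s hs => by
    rw [critQuad_eq_mul_sub_mul_sub hsum hprod]
    exact mul_pos (mul_pos ha (by linarith [hs.1])) (by linarith [hs.1])
  have := hanti (left_mem_Icc.2 hr.2.le) (right_mem_Icc.2 hr.2.le) hr.2
  rw [hEr, logDiscRatio_one] at this
  exact lt_irrefl 0 this

lemma logDiscRatio_pos_of_ne (hp0 : 0 ≤ p) (hp2 : p ≤ 2) {r r' : ℝ} (hr : r ∈ Ioo 0 1)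
    (hrr' : r < r') (hsum : α * (2 - p) * (r + r') = 2 - p - α * p)
    (hprod : α * (2 - p) * r * r' = p) (ha : 0 < α * (2 - p)) (hEr : logDiscRatio α p r = 0)
    {s : ℝ} (hs : s ∈ Ioo 0 1) (hsr : s ≠ r) : 0 < logDiscRatio α p s := by
  have hq := critQuad_eq_mul_sub_mul_sub hsum hprod
  rcases hsr.lt_or_gt with hsr | hrs
  · have hanti := strictAntiOn_logDiscRatio (v := r) hp0 hp2 hs.1 fun t ht => by
      rw [hq]
      exact mul_pos_of_neg_of_neg (mul_neg_of_pos_of_neg ha (by linarith [ht.2]))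
        (by linarith [ht.2])
    simpa [hEr] using hanti (left_mem_Icc.2 hsr.le) (right_mem_Icc.2 hsr.le) hsr
  rcases le_or_gt s r' with hsr' | hr's
  · have hmono := strictMonoOn_logDiscRatio (v := s) hp0 hp2 hr.1 fun t ht => by
      rw [hq]
      exact mul_neg_of_pos_of_neg (mul_pos ha (by linarith [ht.1])) (by linarith [ht.2])
    simpa [hEr] using hmono (left_mem_Icc.2 hrs.le) (right_mem_Icc.2 hrs.le) hrs
  · have hanti := strictAntiOn_logDiscRatio (v := 1) hp0 hp2 hs.1 fun t ht => by
      rw [hq]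
      exact mul_pos (mul_pos ha (by linarith [ht.1])) (by linarith [ht.1])
    simpa [logDiscRatio_one] using hanti (left_mem_Icc.2 hs.2.le) (right_mem_Icc.2 hs.2.le) hs.2

theorem sign_of_sq_eq_disc (hα0 : 0 < α) (hα : 2 < (1 + α) ^ 2) (hp0 : 0 < p) (hp2 : p < 2)
    {h : ℝ → ℝ} (hcont : ContinuousOn h (Icc 0 1)) (hsq : ∀ s ∈ Icc 0 1, h s ^ 2 = disc α p s)
    (h0 : 0 < h 0) (hle : ∀ s ∈ Icc 0 1, h s ≤ (2 - p) * (1 - s)) {sp : ℝ}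
    (hsp : sp = ((2 - p - α * p) -
      √((2 - p - α * p) ^ 2 - 4 * α * p * (2 - p))) / (2 * α * (2 - p))) :
    sp ∈ Ioo 0 1 ∧ (∀ s ∈ Icc sp 1, h s ≤ 0) ∧ ∀ s ∈ Ico 0 sp, 0 ≤ h s := by
  have hb (s : ℝ) (hs : 0 < s) : (2 - p) * s + p ≠ 0 := (two_sub_mul_add_pos hp0.le hp2.le hs).ne'
  have hE : ∀ s ∈ Ioo 0 1, 0 ≤ logDiscRatio α p s := fun s hs =>
    (logDiscRatio_nonneg_iff (hb s hs.1) hs.1).2 (hsq s (Ioo_subset_Icc_self hs) ▸ sq_nonneg _)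
  obtain ⟨r, s₁, hr0, hrs₁, hs₁1, hr, hs₁⟩ :=
    exists_root_of_sq_eq_disc hα0 hα hp0 hp2.le hcont hsq h0 hle
  have hrI : r ∈ Ioo 0 1 := ⟨hr0, hrs₁.trans hs₁1⟩
  have hEr : logDiscRatio α p r = 0 := by
    have hD : disc α p r = 0 := by rw [← hsq r (Ioo_subset_Icc_self hrI), hr, sq, mul_zero]
    refine le_antisymm (not_lt.1 fun hpos => ?_) (hE r hrI)
    exact ((logDiscRatio_pos_iff (hb r hr0) hr0).1 hpos).ne' hD
  obtain ⟨r', hrr', hsum, hprod⟩ := exists_vieta_of_logDiscRatio_eq_zero hα0 hp0 hp2 hE hrI hEr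
  have ha : 0 < α * (2 - p) := mul_pos hα0 (by linarith)
  have hne (s : ℝ) (hs : s ∈ Ioo 0 1) (hsr : s ≠ r) : h s ≠ 0 := fun hs0 => by
    have := (logDiscRatio_pos_iff (hb s hs.1) hs.1).1
      (logDiscRatio_pos_of_ne hp0.le hp2.le hrI hrr' hsum hprod ha hEr hs hsr)
    rw [← hsq s (Ioo_subset_Icc_self hs), hs0] at this
    simp at this
  have hspr : sp = r := by
    rw [hsp, ← sub_sqrt_discrim_div_eq ha hsum hprod hrr'.le]
    ring_nf
  subst hspr
  have h1 : h 1 = 0 :=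
    (pow_eq_zero_iff two_ne_zero).1 ((hsq 1 (right_mem_Icc.2 zero_le_one)).trans disc_one)
  exact ⟨hrI, sign_of_unique_zero hcont hr0 hrs₁ hs₁1 h0 hr h1 hs₁ hne⟩

end Discriminant

theorem pgf_branches_large_alpha_general
    (α : ℝ) (hα0 : Real.sqrt 2 - 1 < α)
    (μ : ℕ → ℝ≥0∞) (hμ : SatisfiesRDE α μ)
    (p : ℝ) (hp : p = (μ 0).toReal)
    (sp : ℝ)
    (hsp : sp = ((2 - p - α * p) -
      Real.sqrt ((2 - p - α * p) ^ 2 - 4 * α * p * (2 - p))) / (2 * α * (2 - p))) :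
    sp ∈ Set.Ioo (0 : ℝ) 1 ∧
    (∀ s ∈ Set.Icc sp 1,
      pgf μ s = (1 / 2) * ((2 - p) * s + p -
        Real.sqrt (((2 - p) * s + p) ^ 2 - 4 * s * Real.exp (α * (s - 1))))) ∧
    (∀ s ∈ Set.Ico (0 : ℝ) sp,
      pgf μ s = (1 / 2) * ((2 - p) * s + p +
        Real.sqrt (((2 - p) * s + p) ^ 2 - 4 * s * Real.exp (α * (s - 1))))) := by
  have hα : 0 < α := by linarith [Real.one_lt_sqrt_two]
  have hα2 : 2 < (1 + α) ^ 2 := (Real.sqrt_lt' (by linarith)).1 (by linarith)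
  have hp0 : 0 < p := hp ▸ ENNReal.toReal_pos hμ.apply_zero_pos.ne' (hμ.apply_ne_top 0)
  have hp1 : p ≤ 1 := hp ▸ ENNReal.toReal_le_of_le_ofReal zero_le_one
    (by simpa [hμ.1] using ENNReal.le_tsum (f := μ) 0)
  have hsq : ∀ s ∈ Icc 0 1, (2 * pgf μ s - ((2 - p) * s + p)) ^ 2 = disc α p s := fun s hs => by
    rw [disc, hp]
    linear_combination 4 * hμ.pgf_quadratic hα.le hs.1 hs.2
  obtain ⟨hspI, hneg, hpos⟩ := sign_of_sq_eq_disc hα hα2 hp0 (by linarith)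
    (h := fun s => 2 * pgf μ s - ((2 - p) * s + p))
    ((continuousOn_const.mul (continuousOn_pgf (hμ.1 ▸ ENNReal.one_ne_top))).sub (by fun_prop))
    hsq (by simp [pgf_zero, ← hp, hp0])
    (fun s hs => by nlinarith [pgf_le_one hμ.1 hs.1 hs.2]) hsp
  exact ⟨hspI,
    fun s hs => eq_half_sub_sqrt_of_sq_eq (hsq s ⟨hspI.1.le.trans hs.1, hs.2⟩) (hneg s hs),
    fun s hs => eq_half_add_sqrt_of_sq_eq (hsq s ⟨hs.1, hs.2.le.trans hspI.2.le⟩) (hpos s hs)⟩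

/-- For √2 − 1 < α < 1, with
s_p := ((2 − p − αp) − √((2 − p − αp)² − 4αp(2−p)))/(2α(2−p)), we have s_p ∈ (0,1),
G = Q₋ on [s_p, 1] and G = Q₊ on [0, s_p). -/
theorem pgf_branches_large_alpha
    (α : ℝ) (hα0 : Real.sqrt 2 - 1 < α) (hα1 : α < 1)
    (μ : ℕ → ℝ≥0∞) (hμ : SatisfiesRDE α μ)
    (p : ℝ) (hp : p = (μ 0).toReal)
    (sp : ℝ)
    (hsp : sp = ((2 - p - α * p) -
      Real.sqrt ((2 - p - α * p) ^ 2 - 4 * α * p * (2 - p))) / (2 * α * (2 - p))) :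
    sp ∈ Set.Ioo (0 : ℝ) 1 ∧
    (∀ s ∈ Set.Icc sp 1,
      pgf μ s = (1 / 2) * ((2 - p) * s + p -
        Real.sqrt (((2 - p) * s + p) ^ 2 - 4 * s * Real.exp (α * (s - 1))))) ∧
    (∀ s ∈ Set.Ico (0 : ℝ) sp,
      pgf μ s = (1 / 2) * ((2 - p) * s + p +
        Real.sqrt (((2 - p) * s + p) ^ 2 - 4 * s * Real.exp (α * (s - 1))))) :=
  pgf_branches_large_alpha_general α hα0 μ hμ p hp sp hsp
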